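/- Let ρ be any positive semidefinite 4×4 matrix on ℂ²⊗ℂ² whose partial trace over the second factor equals I/2. Then tr[(|1⟩⟨1|⊗|0⟩⟨0| + |−⟩⟨−|⊗|1⟩⟨1|)·ρ] ≤ cos²(π/8). Hence a cheating Bob cannot win a single coin flip with probability exceeding cos²(π/8). -/

import Mathlib

open scoped ComplexOrder

noncomputable section

def ket0 : Fin 2 → ℂ := ![1, 0]
def ket1 : Fin 2 → ℂ := ![0, 1]
def ketM : Fin 2 → ℂ := ![(Real.sqrt 2)⁻¹, -(Real.sqrt 2)⁻¹]

/-- Kronecker-type tensor product of two single-qubit operators,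
indexed by `Fin 2 × Fin 2` (Alice register ⊗ message register) -/
def tens (A B : Matrix (Fin 2) (Fin 2) ℂ) :
    Matrix (Fin 2 × Fin 2) (Fin 2 × Fin 2) ℂ :=
  Matrix.of fun p q => A p.1 q.1 * B p.2 q.2

/-- Bob's winning measurement operator |1⟩⟨1|⊗|0⟩⟨0| + |−⟩⟨−|⊗|1⟩⟨1| -/
def W : Matrix (Fin 2 × Fin 2) (Fin 2 × Fin 2) ℂ :=
  tens (Matrix.vecMulVec ket1 (star ket1)) (Matrix.vecMulVec ket0 (star ket0)) +
  tens (Matrix.vecMulVec ketM (star ketM)) (Matrix.vecMulVec ket1 (star ket1))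

/-- partial trace over the second (message) register -/
def ptrM (ρ : Matrix (Fin 2 × Fin 2) (Fin 2 × Fin 2) ℂ) : Matrix (Fin 2) (Fin 2) ℂ :=
  Matrix.of fun i j => ∑ k : Fin 2, ρ (i, k) (j, k)

open scoped Matrix

namespace BobAux

/-- the dual-certificate matrix `Y` -/
def Ym : Matrix (Fin 2) (Fin 2) ℂ :=
  !![(((1 + Real.sqrt 2)/4 : ℝ) : ℂ), ((-(1/4) : ℝ) : ℂ);
     ((-(1/4) : ℝ) : ℂ), (((3 + Real.sqrt 2)/4 : ℝ) : ℂ)]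

def sA : ℝ := Real.sqrt ((1 + Real.sqrt 2)/4)
def sC : ℝ := Real.sqrt ((Real.sqrt 2 - 1)/4)

def v1 : Fin 2 × Fin 2 → ℂ := fun p => ![![(sA : ℂ), 0], ![(-(sC : ℝ) : ℂ), 0]] p.1 p.2
def v2 : Fin 2 × Fin 2 → ℂ := fun p => ![![0, (sC : ℂ)], ![0, (sA : ℂ)]] p.1 p.2

lemma s_nonneg : (0:ℝ) ≤ Real.sqrt 2 := Real.sqrt_nonneg 2
lemma s_ge_one : (1:ℝ) ≤ Real.sqrt 2 := by
  rw [show (1:ℝ) = Real.sqrt 1 by simp]; exact Real.sqrt_le_sqrt (by norm_num)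
lemma s_sq : Real.sqrt 2 * Real.sqrt 2 = 2 := Real.mul_self_sqrt (by norm_num)

lemma hA : sA * sA = (1 + Real.sqrt 2)/4 :=
  Real.mul_self_sqrt (by nlinarith [s_nonneg])
lemma hC : sC * sC = (Real.sqrt 2 - 1)/4 :=
  Real.mul_self_sqrt (by nlinarith [s_ge_one])
lemma hAC : sA * sC = 1/4 := by
  rw [sA, sC, ← Real.sqrt_mul (by nlinarith [s_nonneg])]
  rw [show (1 + Real.sqrt 2)/4 * ((Real.sqrt 2 - 1)/4) = 1/16 by nlinarith [s_sq]]
  rw [show (1:ℝ)/16 = (1/4)^2 by norm_num, Real.sqrt_sq (by norm_num)]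

/-- the decomposition certifying `tens Ym 1 - W ⪰ 0` -/
lemma key : tens Ym 1 - W =
    Matrix.vecMulVec v1 (star v1) + Matrix.vecMulVec v2 (star v2) := by
  have hs2 : (Real.sqrt 2 : ℝ) ≠ 0 := by positivity
  ext ⟨i, k⟩ ⟨j, l⟩
  fin_cases i <;> fin_cases k <;> fin_cases j <;> fin_cases l <;>
    simp [tens, W, Ym, v1, v2, ket0, ket1, ketM, Matrix.vecMulVec_apply,
      Matrix.one_apply, Complex.ext_iff, ← Complex.ofReal_inv, ← Complex.ofReal_neg,
      ← Complex.ofReal_mul] <;>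
    field_simp <;>
    nlinarith [hA, hC, hAC, s_sq, s_ge_one]

lemma psd_vmv (v : Fin 2 × Fin 2 → ℂ) : (Matrix.vecMulVec v (star v)).PosSemidef := by
  have h : Matrix.vecMulVec v (star v) =
      (Matrix.replicateRow Unit (star v))ᴴ * Matrix.replicateRow Unit (star v) := by
    rw [Matrix.conjTranspose_replicateRow, star_star, ← Matrix.vecMulVec_eq]
  rw [h]
  exact Matrix.posSemidef_conjTranspose_mul_self _

lemma Z_psd : (tens Ym 1 - W).PosSemidef := by
  rw [key]; exact (psd_vmv v1).add (psd_vmv v2)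

lemma trace_psd_nonneg (Z ρ : Matrix (Fin 2 × Fin 2) (Fin 2 × Fin 2) ℂ)
    (hZ : Z.PosSemidef) (hρ : ρ.PosSemidef) : 0 ≤ ((Z * ρ).trace).re := by
  obtain ⟨L, rfl⟩ : ∃ L : Matrix (Fin 2 × Fin 2) (Fin 2 × Fin 2) ℂ, Z = Lᴴ * L := by
    open scoped MatrixOrder Matrix.Norms.L2Operator in
    exact CStarAlgebra.nonneg_iff_eq_star_mul_self.mp hZ.nonneg
  obtain ⟨B, rfl⟩ : ∃ B : Matrix (Fin 2 × Fin 2) (Fin 2 × Fin 2) ℂ, ρ = Bᴴ * B := by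
    open scoped MatrixOrder Matrix.Norms.L2Operator in
    exact CStarAlgebra.nonneg_iff_eq_star_mul_self.mp hρ.nonneg
  have h : (Lᴴ * L * (Bᴴ * B)).trace = ((L * Bᴴ) * (L * Bᴴ)ᴴ).trace := by
    rw [Matrix.conjTranspose_mul, Matrix.conjTranspose_conjTranspose,
      show Lᴴ * L * (Bᴴ * B) = Lᴴ * (L * Bᴴ * B) by noncomm_ring,
      Matrix.trace_mul_comm, Matrix.mul_assoc]
  rw [h]
  set C := L * Bᴴ with hCdef
  have h2 : (C * Cᴴ).trace = ∑ i, ∑ j, ((Complex.normSq (C i j) : ℝ) : ℂ) := by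
    simp only [Matrix.trace, Matrix.diag_apply]
    refine Finset.sum_congr rfl fun i _ => ?_
    rw [Matrix.mul_apply]
    refine Finset.sum_congr rfl fun j _ => ?_
    rw [Matrix.conjTranspose_apply, RCLike.star_def, Complex.mul_conj]
  rw [h2]
  have h3 : (∑ i, ∑ j, ((Complex.normSq (C i j) : ℝ) : ℂ))
      = (((∑ i, ∑ j, Complex.normSq (C i j)) : ℝ) : ℂ) := by
    push_cast; ring
  rw [h3, Complex.ofReal_re]
  exact Finset.sum_nonneg fun i _ => Finset.sum_nonneg fun j _ => Complex.normSq_nonneg _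

lemma trace_tens_y (ρ : Matrix (Fin 2 × Fin 2) (Fin 2 × Fin 2) ℂ)
    (hptr : ptrM ρ = (1/2 : ℂ) • 1) :
    ((tens Ym 1) * ρ).trace = (((2 + Real.sqrt 2)/4 : ℝ) : ℂ) := by
  have h : ((tens Ym 1) * ρ).trace = (Ym * ptrM ρ).trace := by
    simp only [Matrix.trace, Matrix.mul_apply, tens, ptrM, Matrix.diag_apply, Matrix.of_apply,
      Fintype.sum_prod_type, Fin.sum_univ_two, Matrix.one_apply]
    simp [Fin.sum_univ_two]
    ring
  rw [h, hptr]
  simp [Ym, Matrix.trace, Matrix.mul_apply, Fin.sum_univ_two, Matrix.one_apply]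
  ring_nf

end BobAux

theorem bob_cheating_bound
    (ρ : Matrix (Fin 2 × Fin 2) (Fin 2 × Fin 2) ℂ) (hρ : ρ.PosSemidef)
    (hptr : ptrM ρ = (1/2 : ℂ) • 1) :
    ((W * ρ).trace).re ≤ Real.cos (Real.pi / 8) ^ 2 := by
  have hcos : Real.cos (Real.pi / 8) ^ 2 = (2 + Real.sqrt 2)/4 := by
    rw [Real.cos_pi_div_eight]
    rw [div_pow, Real.sq_sqrt (by positivity)]
    norm_num
  have hZ := BobAux.Z_psd
  have hnn := BobAux.trace_psd_nonneg _ _ hZ hρ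
  have hsplit : (W * ρ).trace = ((tens BobAux.Ym 1) * ρ).trace
      - ((tens BobAux.Ym 1 - W) * ρ).trace := by
    rw [Matrix.sub_mul, Matrix.trace_sub]; ring
  rw [hsplit, BobAux.trace_tens_y ρ hptr, hcos]
  rw [Complex.sub_re, Complex.ofReal_re]
  linarith
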